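/- Let (N_1,…,N_r) be a lattice path presentation with parameters m ≥ 0 and r ≥ 1, and let n be the incidence function of M[N]. Every nontrivial connected flat X of the lattice path matroid M[N] is an interval of consecutive integers in {1,…,m+r}, and n(X) is an interval of exactly r(X) consecutive integers in {1,…,r}. -/

import Mathlib

open Set
open scoped Matroid

namespace LPM

variable {α β : Type*}

/-- `I` is a partial transversal of the set family `N`: there is an injection
matching each element of `I` to an index of a member of the family containing it. -/
def IsPT {ι : Type*} (N : ι → Set α) (I : Set α) : Prop :=
  ∃ f : I → ι, Function.Injective f ∧ ∀ x : I, (x : α) ∈ N (f x)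

/-- `I` is a (full) transversal of the set family `N`: there is a bijection
matching each element of `I` to an index of a member of the family containing it. -/
def IsT {ι : Type*} (N : ι → Set α) (I : Set α) : Prop :=
  ∃ f : I → ι, Function.Bijective f ∧ ∀ x : I, (x : α) ∈ N (f x)

/-- A lattice path presentation with nullity `m` and rank `r`: a sequence of
intervals `[l i, g i] ⊆ {1, …, m + r}` whose left endpoints strictly increase
and whose right endpoints strictly increase. -/
structure LPP (m r : ℕ) where
  l : Fin r → ℕ
  g : Fin r → ℕ
  l_strictMono : StrictMono l
  g_strictMono : StrictMono g
  one_le_l : ∀ i, 1 ≤ l i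
  l_le_g : ∀ i, l i ≤ g i
  g_le : ∀ i, g i ≤ m + r

/-- The intervals of a lattice path presentation. -/
def LPP.N {m r : ℕ} (P : LPP m r) (i : Fin r) : Set ℕ := Set.Icc (P.l i) (P.g i)

/-- `M` is the lattice path matroid `M[N]` of the presentation `P`: the ground set
is `{1, …, m + r}` and the independent sets are exactly the partial transversals
of the intervals of `P`. -/
def IsLPMOf {m r : ℕ} (P : LPP m r) (M : Matroid ℕ) : Prop :=
  M.E = Set.Icc 1 (m + r) ∧
    ∀ I : Set ℕ, M.Indep I ↔ I ⊆ Set.Icc 1 (m + r) ∧ IsPT P.N I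

/-- `M` is isomorphic to `M'`: there is a bijection between the ground sets
carrying independent sets to independent sets in both directions. -/
def IsoTo (M : Matroid α) (M' : Matroid β) : Prop :=
  ∃ f : α → β, Set.BijOn f M.E M'.E ∧ ∀ I ⊆ M.E, (M.Indep I ↔ M'.Indep (f '' I))

/-- A lattice path matroid: a matroid isomorphic to `M[N]` for some lattice path
presentation (presentations with `r = 0` give the rank-zero matroids). -/
def IsLPMatroid (M : Matroid α) : Prop :=
  ∃ (m r : ℕ) (P : LPP m r) (M₀ : Matroid ℕ), IsLPMOf P M₀ ∧ IsoTo M M₀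

/-- A circuit of a matroid: a minimal dependent subset of the ground set. -/
def Circuit (M : Matroid α) (C : Set α) : Prop :=
  C ⊆ M.E ∧ ¬ M.Indep C ∧ ∀ D : Set α, D ⊂ C → M.Indep D

/-- A matroid is connected if every two distinct elements of the ground set lie
in a common circuit. -/
def Connected (M : Matroid α) : Prop :=
  ∀ x ∈ M.E, ∀ y ∈ M.E, x ≠ y → ∃ C, Circuit M C ∧ x ∈ C ∧ y ∈ C

/-- The rank of a set in a matroid: the supremum of the cardinalities of its
independent subsets. -/
noncomputable def rk (M : Matroid α) (X : Set α) : ℕ :=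
  sSup {n | ∃ I, I ⊆ X ∧ M.Indep I ∧ I.ncard = n}

/-- A nontrivial connected flat: a flat that is dependent and whose restriction
is a connected matroid. -/
def NTConnFlat (M : Matroid α) (X : Set α) : Prop :=
  M.IsFlat X ∧ ¬ M.Indep X ∧ Connected (M ↾ X)

/-- Deletion of a set from a matroid. -/
def delete (M : Matroid α) (D : Set α) : Matroid α := M ↾ (M.E \ D)

/-- Contraction of a set in a matroid, defined via duality. -/
def contract (M : Matroid α) (C : Set α) : Matroid α := (delete M✶ C)✶

/-- `Minor M' M` means that `M'` is obtained from `M` by a sequence of deletions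
and contractions. -/
inductive Minor : Matroid α → Matroid α → Prop
  | refl (M : Matroid α) : Minor M M
  | del {M' M : Matroid α} (D : Set α) (h : Minor M' M) : Minor (delete M' D) M
  | con {M' M : Matroid α} (C : Set α) (h : Minor M' M) : Minor (contract M' C) M

end LPM

/-! Write `lo x` and `hi x` for the first and the last interval containing `x`. For intervals,
Hall's condition reduces to counting on segments: a set is a transversal iff each segment `[u, v]`
of it has at most `hi v - lo u + 1` elements. Hence a circuit `C` with extreme elements `a < b`
has at least `hi b - lo a + 2` elements, while an independent subset of `[a, b]` has at most
`hi b - lo a + 1`. If `y ∈ (a, b)` were missing from a connected flat `X` with extremes `a, b`,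
trading `a` for `y` in a circuit through `a` and `b` would give such a subset of size `|C|`; so
`X = [a, b]`, and `C \ {a}` shows that its rank is `hi b - lo a + 1`, the number of intervals
meeting `[a, b]`. -/

namespace LPM

section Presentation

variable {m r : ℕ} {P : LPP m r}

def NonLoop (P : LPP m r) (x : ℕ) : Prop := ∃ i, x ∈ P.N i

/-- For a non-loop `x`, the indices `i` with `x ∈ P.N i` are exactly those with
`lo P x ≤ i ≤ hi P x` (`mem_N_iff`). -/
noncomputable def lo (P : LPP m r) (x : ℕ) : ℕ := sInf {v | ∃ h : v < r, x ≤ P.g ⟨v, h⟩}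

noncomputable def hi (P : LPP m r) (x : ℕ) : ℕ := sSup {v | ∃ h : v < r, P.l ⟨v, h⟩ ≤ x}

lemma bddAbove_hi_set (x : ℕ) : BddAbove {v | ∃ h : v < r, P.l ⟨v, h⟩ ≤ x} :=
  ⟨r, fun _ hv => hv.1.le⟩

lemma lo_mem {x : ℕ} (hx : NonLoop P x) : ∃ h : lo P x < r, x ≤ P.g ⟨lo P x, h⟩ := by
  obtain ⟨i, -, hg⟩ := hx
  exact Nat.sInf_mem (s := {v | ∃ h : v < r, x ≤ P.g ⟨v, h⟩}) ⟨i, i.isLt, hg⟩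

lemma hi_mem {x : ℕ} (hx : NonLoop P x) : ∃ h : hi P x < r, P.l ⟨hi P x, h⟩ ≤ x := by
  obtain ⟨i, hl, -⟩ := hx
  exact Nat.sSup_mem (s := {v | ∃ h : v < r, P.l ⟨v, h⟩ ≤ x}) ⟨i, i.isLt, hl⟩
    (bddAbove_hi_set x)

lemma lo_lt {x : ℕ} (hx : NonLoop P x) : lo P x < r := (lo_mem hx).1

lemma hi_lt {x : ℕ} (hx : NonLoop P x) : hi P x < r := (hi_mem hx).1

lemma lo_le_of_le_g {x : ℕ} {i : Fin r} (h : x ≤ P.g i) : lo P x ≤ i :=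
  Nat.sInf_le ⟨i.isLt, h⟩

lemma le_hi_of_l_le {x : ℕ} {i : Fin r} (h : P.l i ≤ x) : (i : ℕ) ≤ hi P x :=
  le_csSup (bddAbove_hi_set x) ⟨i.isLt, h⟩

lemma le_g_iff {x : ℕ} (hx : NonLoop P x) (i : Fin r) : x ≤ P.g i ↔ lo P x ≤ i := by
  refine ⟨lo_le_of_le_g, fun h => ?_⟩
  obtain ⟨hlt, hg⟩ := lo_mem hx
  exact hg.trans (P.g_strictMono.monotone (show (⟨lo P x, hlt⟩ : Fin r) ≤ i from h))

lemma l_le_iff {x : ℕ} (hx : NonLoop P x) (i : Fin r) : P.l i ≤ x ↔ (i : ℕ) ≤ hi P x := by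
  refine ⟨le_hi_of_l_le, fun h => ?_⟩
  obtain ⟨hlt, hl⟩ := hi_mem hx
  exact (P.l_strictMono.monotone (show i ≤ (⟨hi P x, hlt⟩ : Fin r) from h)).trans hl

lemma mem_N_iff {x : ℕ} (hx : NonLoop P x) (i : Fin r) :
    x ∈ P.N i ↔ lo P x ≤ i ∧ (i : ℕ) ≤ hi P x := by
  rw [LPP.N, mem_Icc, l_le_iff hx, le_g_iff hx, and_comm]

lemma lo_mono {x y : ℕ} (hy : NonLoop P y) (hxy : x ≤ y) : lo P x ≤ lo P y :=
  lo_le_of_le_g (hxy.trans (lo_mem hy).2)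

lemma hi_mono {x y : ℕ} (hx : NonLoop P x) (hxy : x ≤ y) : hi P x ≤ hi P y :=
  le_hi_of_l_le ((hi_mem hx).2.trans hxy)

lemma lo_le_hi {x : ℕ} (hx : NonLoop P x) : lo P x ≤ hi P x := by
  obtain ⟨i, hxi⟩ := hx
  obtain ⟨hlo, hhi⟩ := (mem_N_iff ⟨i, hxi⟩ i).1 hxi
  exact hlo.trans hhi

lemma Icc_inter_N_nonempty_iff {a b : ℕ} {i : Fin r} :
    (Icc a b ∩ P.N i).Nonempty ↔ a ⊔ P.l i ≤ b ⊓ P.g i := by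
  rw [LPP.N, Icc_inter_Icc, nonempty_Icc]

lemma Icc_inter_N_nonempty_of_le_of_le {a b : ℕ} {i j t : Fin r} (hij : i ≤ j) (hjt : j ≤ t)
    (hNi : (Icc a b ∩ P.N i).Nonempty) (hNt : (Icc a b ∩ P.N t).Nonempty) :
    (Icc a b ∩ P.N j).Nonempty := by
  have hl := P.l_strictMono.monotone hjt
  have hg := P.g_strictMono.monotone hij
  have hlg := P.l_le_g j
  simp only [Icc_inter_N_nonempty_iff, sup_le_iff, le_inf_iff] at hNi hNt ⊢
  omega

lemma ncard_setOf_Icc_inter_N_nonempty {a b : ℕ} (ha : NonLoop P a) (hb : NonLoop P b)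
    (hab : a ≤ b) : {i | (Icc a b ∩ P.N i).Nonempty}.ncard = hi P b + 1 - lo P a := by
  have hset : {i | (Icc a b ∩ P.N i).Nonempty} =
      ↑(Finset.Icc (⟨lo P a, lo_lt ha⟩ : Fin r) ⟨hi P b, hi_lt hb⟩) := by
    ext i
    have hlg := P.l_le_g i
    simp only [mem_ofPred_eq, Icc_inter_N_nonempty_iff, sup_le_iff, le_inf_iff, Finset.coe_Icc,
      mem_Icc, Fin.le_def, ← le_g_iff ha, ← l_le_iff hb]
    omega
  rw [hset, ncard_coe_finset, Fin.card_Icc]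

end Presentation

lemma IsPT.mono {α ι : Type*} {N : ι → Set α} {S T : Set α} (h : IsPT N S) (hTS : T ⊆ S) :
    IsPT N T := by
  obtain ⟨f, hinj, hmem⟩ := h
  refine ⟨fun x => f ⟨x, hTS x.2⟩, fun x y hxy => ?_, fun x => hmem ⟨x, hTS x.2⟩⟩
  exact Subtype.ext (congrArg Subtype.val (hinj hxy) :)

section Transversal

variable {m r : ℕ} {P : LPP m r}

lemma IsPT.nonLoop {S : Set ℕ} (h : IsPT P.N S) {x : ℕ} (hx : x ∈ S) : NonLoop P x := by
  obtain ⟨f, -, hmem⟩ := h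
  exact ⟨f ⟨x, hx⟩, hmem ⟨x, hx⟩⟩

lemma IsPT.ncard_le {T : Set ℕ} (hT : IsPT P.N T) {u v : ℕ} (hTuv : T ⊆ Icc u v) :
    T.ncard ≤ hi P v + 1 - lo P u := by
  have hnl (t : T) : NonLoop P t := hT.nonLoop t.2
  obtain ⟨f, hinj, hmem⟩ := hT
  have hbounds (t : T) : (f t : ℕ) ∈ Icc (lo P u) (hi P v) := by
    have ht := hnl t
    obtain ⟨hlo, hhi⟩ := (mem_N_iff ht _).1 (hmem t)
    exact ⟨(lo_mono ht (hTuv t.2).1).trans hlo, hhi.trans (hi_mono ht (hTuv t.2).2)⟩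
  rw [← Nat.card_coe_set_eq, ← ncard_Icc_nat, ← Nat.card_coe_set_eq]
  exact Nat.card_le_card_of_injective (fun t => ⟨f t, hbounds t⟩)
    fun s t hst => hinj (Fin.ext (congrArg Subtype.val hst))

lemma IsPT.lo_add_ncard_le {T : Set ℕ} (hT : IsPT P.N T) {u v : ℕ} (hTuv : T ⊆ Icc u v)
    (hu : NonLoop P u) (huv : u ≤ v) : lo P u + T.ncard ≤ hi P v + 1 := by
  have := hT.ncard_le hTuv
  have := (lo_le_hi hu).trans (hi_mono hu huv)
  omega

lemma isPT_of_forall_lo_add_ncard_le {S : Set ℕ} (hS : S.Finite) (hnl : ∀ x ∈ S, NonLoop P x)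
    (h : ∀ u ∈ S, ∀ v ∈ S, u ≤ v → lo P u + (S ∩ Icc u v).ncard ≤ hi P v + 1) :
    IsPT P.N S := by
  classical
  -- greedy matching: `x` gets the least index above those taken by the elements of `S` below it
  let ψ : ℕ → ℕ := fun x =>
    {p ∈ hS.toFinset | p ≤ x}.sup fun p => lo P p + (S ∩ Ico p x).ncard
  have le_ψ {p x : ℕ} (hp : p ∈ S) (hpx : p ≤ x) : lo P p + (S ∩ Ico p x).ncard ≤ ψ x :=
    Finset.le_sup (f := fun p => lo P p + (S ∩ Ico p x).ncard) (by simp [hp, hpx])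
  have lo_le_ψ {x : ℕ} (hx : x ∈ S) : lo P x ≤ ψ x := by simpa using le_ψ hx le_rfl
  have ψ_le_hi {x : ℕ} (hx : x ∈ S) : ψ x ≤ hi P x := by
    refine Finset.sup_le fun p hp => ?_
    rw [Finset.mem_filter, hS.mem_toFinset] at hp
    have hcount := h p hp.1 x hx hp.2
    rwa [← Ico_insert_right hp.2, inter_insert_of_mem hx,
      ncard_insert_of_notMem (by simp) (hS.inter_of_left _), ← add_assoc,
      Nat.add_le_add_iff_right] at hcount
  have ψ_strictMonoOn : StrictMonoOn ψ S := by
    intro x hx y hy hxy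
    have hpos : ⊥ < ψ y := by
      have := le_ψ hx hxy.le
      have := (ncard_pos (hS.inter_of_left _)).2 ⟨x, hx, mem_Ico.2 ⟨le_rfl, hxy⟩⟩
      rw [Nat.bot_eq_zero]
      omega
    refine (Finset.sup_lt_iff hpos).2 fun p hp => ?_
    rw [Finset.mem_filter, hS.mem_toFinset] at hp
    refine lt_of_lt_of_le ?_ (le_ψ hp.1 (hp.2.trans hxy.le))
    gcongr
    exact ncard_lt_ncard ⟨inter_subset_inter_right _ (Ico_subset_Ico_right hxy.le),
      fun hsub => (hsub ⟨hx, hp.2, hxy⟩).2.2.false⟩ (hS.inter_of_left _)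
  exact ⟨fun x => ⟨ψ x, (ψ_le_hi x.2).trans_lt (hi_lt (hnl x x.2))⟩,
    fun x y hxy => Subtype.ext (ψ_strictMonoOn.injOn x.2 y.2 (congrArg Fin.val hxy)),
    fun x => (mem_N_iff (hnl x x.2) _).2 ⟨lo_le_ψ x.2, ψ_le_hi x.2⟩⟩

end Transversal

section Matroid

variable {α : Type*} {M : Matroid α}

lemma exists_circuit_of_connected_restrict {X : Set α} (hX : X ⊆ M.E) (h : Connected (M ↾ X))
    {a b : α} (ha : a ∈ X) (hb : b ∈ X) (hab : a ≠ b) :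
    ∃ C, Circuit M C ∧ C ⊆ X ∧ a ∈ C ∧ b ∈ C := by
  obtain ⟨C, ⟨hCX, hCdep, hCmin⟩, haC, hbC⟩ := h a ha b hb hab
  exact ⟨C, ⟨hCX.trans hX, fun hC => hCdep (Matroid.restrict_indep_iff.2 ⟨hC, hCX⟩),
    fun D hD => (Matroid.restrict_indep_iff.1 (hCmin D hD)).1⟩, hCX, haC, hbC⟩

lemma _root_.Matroid.IsFlat.insert_indep {X I : Set α} {e : α} (hX : M.IsFlat X)
    (hI : M.Indep I) (hIX : I ⊆ X) (he : e ∈ M.E) (heX : e ∉ X) : M.Indep (insert e I) :=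
  hI.insert_indep_iff.2 <| Or.inl
    ⟨he, fun h => heX (hX.closure ▸ M.closure_subset_closure hIX h)⟩

lemma rk_eq_of_forall_ncard_le {X : Set α} {k : ℕ}
    (hle : ∀ I ⊆ X, M.Indep I → I.ncard ≤ k)
    (hex : ∃ I ⊆ X, M.Indep I ∧ k ≤ I.ncard) : rk M X = k := by
  obtain ⟨I, hIX, hI, hk⟩ := hex
  have hbound : ∀ n ∈ {n | ∃ I, I ⊆ X ∧ M.Indep I ∧ I.ncard = n}, n ≤ k := by
    rintro _ ⟨J, hJX, hJ, rfl⟩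
    exact hle J hJX hJ
  exact le_antisymm (csSup_le ⟨_, I, hIX, hI, rfl⟩ hbound)
    (hk.trans (le_csSup ⟨k, hbound⟩ ⟨I, hIX, hI, rfl⟩))

lemma rk_singleton_eq_zero {a : α} (ha : ¬ M.Indep {a}) : rk M {a} = 0 := by
  refine rk_eq_of_forall_ncard_le (fun I hI hind => ?_)
    ⟨∅, empty_subset _, M.empty_indep, Nat.zero_le _⟩
  obtain rfl | rfl := subset_singleton_iff_eq.1 hI
  · simp
  · exact absurd hind ha

lemma NTConnFlat.nonempty {X : Set α} (hX : NTConnFlat M X) : X.Nonempty :=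
  nonempty_iff_ne_empty.2 fun h => hX.2.1 (h ▸ M.empty_indep)

end Matroid

section LatticePathMatroid

variable {m r : ℕ} {P : LPP m r} {M : Matroid ℕ}

lemma IsLPMOf.isPT_of_indep (hM : IsLPMOf P M) {I : Set ℕ} (hI : M.Indep I) : IsPT P.N I :=
  ((hM.2 I).1 hI).2

lemma IsLPMOf.indep_of_isPT (hM : IsLPMOf P M) {I : Set ℕ} (hIE : I ⊆ M.E) (hI : IsPT P.N I) :
    M.Indep I :=
  (hM.2 I).2 ⟨hM.1 ▸ hIE, hI⟩

lemma IsLPMOf.indep_singleton (hM : IsLPMOf P M) {x : ℕ} {i : Fin r} (hx : x ∈ P.N i) :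
    M.Indep {x} := by
  refine hM.indep_of_isPT (hM.1 ▸ singleton_subset_iff.2 ?_)
    ⟨fun _ => i, fun _ _ _ => Subsingleton.elim _ _, ?_⟩
  · exact ⟨(P.one_le_l i).trans hx.1, hx.2.trans (P.g_le i)⟩
  · rintro ⟨y, rfl⟩
    exact hx

lemma IsLPMOf.nonLoop_of_mem_circuit (hM : IsLPMOf P M) {C : Set ℕ} (hC : Circuit M C)
    {c d : ℕ} (hc : c ∈ C) (hd : d ∈ C) (hcd : c ≠ d) : NonLoop P c :=
  (hM.isPT_of_indep (hC.2.2 _ (sdiff_singleton_ssubset.2 hd))).nonLoop ⟨hc, hcd⟩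

lemma IsLPMOf.hi_add_two_le_of_circuit (hM : IsLPMOf P M) {C : Set ℕ} (hC : Circuit M C)
    {a b : ℕ} (ha : a ∈ C) (hb : b ∈ C) (hab : a ≠ b) (hCab : C ⊆ Icc a b) :
    hi P b + 2 ≤ lo P a + C.ncard := by
  have hnl : ∀ c ∈ C, NonLoop P c := fun c hc => by
    by_cases hca : c = a
    · exact hM.nonLoop_of_mem_circuit hC hc hb (hca ▸ hab)
    · exact hM.nonLoop_of_mem_circuit hC hc ha hca
  by_contra hlt
  refine hC.2.1 (hM.indep_of_isPT hC.1 ?_)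
  refine isPT_of_forall_lo_add_ncard_le ((finite_Icc a b).subset hCab) hnl fun u hu v hv huv => ?_
  -- by minimality of `C`, only the segment `[a, b]` itself can violate the count
  by_cases hends : a ∈ Icc u v ∧ b ∈ Icc u v
  · obtain rfl : u = a := le_antisymm hends.1.1 (hCab hu).1
    obtain rfl : v = b := le_antisymm (hCab hv).2 hends.2.2
    rw [inter_eq_left.2 hCab]
    omega
  · obtain ⟨c, hc, hcuv⟩ : ∃ c ∈ C, c ∉ Icc u v := by
      by_cases hauv : a ∈ Icc u v
      · exact ⟨b, hb, fun h => hends ⟨hauv, h⟩⟩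
      · exact ⟨a, ha, hauv⟩
    have hPT := hM.isPT_of_indep (hC.2.2 _ (sdiff_singleton_ssubset.2 hc))
    exact (hPT.mono fun t ht => ⟨ht.1, fun htc => hcuv (htc ▸ ht.2)⟩).lo_add_ncard_le
      inter_subset_right (hnl u hu) huv

lemma IsLPMOf.rk_Icc_of_circuit (hM : IsLPMOf P M) {C : Set ℕ} (hC : Circuit M C) {a b : ℕ}
    (ha : a ∈ C) (hb : b ∈ C) (hab : a ≠ b) (hCab : C ⊆ Icc a b) :
    rk M (Icc a b) = hi P b + 1 - lo P a := by
  have hcount := hM.hi_add_two_le_of_circuit hC ha hb hab hCab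
  have hdiff := ncard_sdiff_singleton_add_one ha ((finite_Icc a b).subset hCab)
  refine rk_eq_of_forall_ncard_le (fun I hI hind => (hM.isPT_of_indep hind).ncard_le hI)
    ⟨C \ {a}, sdiff_subset.trans hCab, hC.2.2 _ (sdiff_singleton_ssubset.2 ha), by omega⟩

lemma IsLPMOf.eq_Icc_of_ntConnFlat (hM : IsLPMOf P M) {X : Set ℕ} (hX : NTConnFlat M X) :
    X = Icc (sInf X) (sSup X) := by
  have hne := hX.nonempty
  obtain ⟨hflat, -, hconn⟩ := hX
  have hXE := hflat.subset_ground
  have hbdd : BddAbove X := ((finite_Icc 1 (m + r)).subset (hM.1 ▸ hXE)).bddAbove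
  have hXab : X ⊆ Icc (sInf X) (sSup X) := subset_Icc_csInf_csSup (OrderBot.bddBelow X) hbdd
  refine hXab.antisymm fun y hy => ?_
  by_contra hyX
  set a := sInf X
  set b := sSup X
  have haX : a ∈ X := Nat.sInf_mem hne
  have hbX : b ∈ X := Nat.sSup_mem hne hbdd
  have hay : a < y := lt_of_le_of_ne hy.1 (by rintro rfl; exact hyX haX)
  have hyb : y < b := lt_of_le_of_ne hy.2 (by rintro rfl; exact hyX hbX)
  have hyE : y ∈ M.E := by
    have ha1 := (hM.1 ▸ hXE haX : a ∈ Icc 1 (m + r)).1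
    have hbmr := (hM.1 ▸ hXE hbX : b ∈ Icc 1 (m + r)).2
    rw [hM.1]
    exact ⟨by omega, by omega⟩
  obtain ⟨C, hC, hCX, haC, hbC⟩ :=
    exists_circuit_of_connected_restrict hXE hconn haX hbX (by omega)
  have hCab := hCX.trans hXab
  have hind : M.Indep (insert y (C \ {a})) := hflat.insert_indep
    (hC.2.2 _ (sdiff_singleton_ssubset.2 haC)) (sdiff_subset.trans hCX) hyE hyX
  have hcount := (hM.isPT_of_indep hind).lo_add_ncard_le
    (insert_subset hy (sdiff_subset.trans hCab)) (hM.nonLoop_of_mem_circuit hC haC hbC (by omega))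
    (by omega)
  rw [ncard_exchange (fun h => hyX (hCX h)) haC] at hcount
  have := hM.hi_add_two_le_of_circuit hC haC hbC (by omega) hCab
  omega

end LatticePathMatroid

end LPM

open LPM in
theorem stmt13_general {m r : ℕ} (P : LPP m r)
    (M : Matroid ℕ) (hM : IsLPMOf P M)
    (X : Set ℕ) (hX : NTConnFlat M X) :
    (∃ a b : ℕ, X = Set.Icc a b) ∧
      (∀ i j t : Fin r, i ≤ j → j ≤ t →
        (X ∩ P.N i).Nonempty → (X ∩ P.N t).Nonempty → (X ∩ P.N j).Nonempty) ∧
      {i : Fin r | (X ∩ P.N i).Nonempty}.ncard = rk M X := by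
  obtain ⟨a, b, rfl⟩ : ∃ a b, X = Icc a b := ⟨_, _, hM.eq_Icc_of_ntConnFlat hX⟩
  refine ⟨⟨a, b, rfl⟩, fun i j t hij hjt => Icc_inter_N_nonempty_of_le_of_le hij hjt, ?_⟩
  have hab' : a ≤ b := nonempty_Icc.1 hX.nonempty
  obtain ⟨hflat, hdep, hconn⟩ := hX
  obtain rfl | hab := eq_or_ne a b
  · rw [Icc_self] at hdep ⊢
    have hempty : {i : Fin r | ({a} ∩ P.N i).Nonempty} = ∅ :=
      eq_empty_of_forall_notMem fun i ⟨x, hxa, hxi⟩ => hdep (hM.indep_singleton (hxa ▸ hxi))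
    rw [hempty, ncard_empty, rk_singleton_eq_zero hdep]
  · obtain ⟨C, hC, hCab, haC, hbC⟩ := exists_circuit_of_connected_restrict hflat.subset_ground
      hconn (left_mem_Icc.2 hab') (right_mem_Icc.2 hab') hab
    rw [ncard_setOf_Icc_inter_N_nonempty (hM.nonLoop_of_mem_circuit hC haC hbC hab)
      (hM.nonLoop_of_mem_circuit hC hbC haC hab.symm) hab',
      hM.rk_Icc_of_circuit hC haC hbC hab hCab]

open LPM in
/-- Every nontrivial connected flat `X` of a lattice path
matroid `M[N]` is an interval of consecutive integers, and `n(X)` is an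
interval of exactly `r(X)` consecutive indices. -/
theorem stmt13 {m r : ℕ} (hr : 1 ≤ r) (P : LPP m r)
    (M : Matroid ℕ) (hM : IsLPMOf P M)
    (X : Set ℕ) (hX : NTConnFlat M X) :
    (∃ a b : ℕ, X = Set.Icc a b) ∧
      (∀ i j t : Fin r, i ≤ j → j ≤ t →
        (X ∩ P.N i).Nonempty → (X ∩ P.N t).Nonempty → (X ∩ P.N j).Nonempty) ∧
      {i : Fin r | (X ∩ P.N i).Nonempty}.ncard = rk M X :=
  stmt13_general P M hM X hX
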